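/- arXiv:1902.00115 — 2 statements merged into one kernel-verified Lean document; each statement's English description precedes it below -/
import Mathlib

section
/- If a density matrix ρ satisfies tr(Π_k ρ) = 1 for some k ∈ {C,1,2,3}, then S_j ρ = ρ S_j = ε_{jk} ρ for each j ∈ {1,2,3}, where ε_{jk} ∈ {−1, +1} is the eigenvalue of S_j on the range of Π_k; consequently D_{S_j}(ρ) = 0 and M_{S_j}(ρ) := S_jρ + ρS_j − 2 tr(S_jρ)ρ = 0 for all j, so ρ is a steady state of the open-loop measurement dynamics. -/
open Matrix Finset
open scoped ComplexOrder

noncomputable section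

/-- 8×8 complex matrices, the three-qubit space with basis `|abc⟩ ↦ 4a+2b+c`. -/
abbrev M8 := Matrix (Fin 8) (Fin 8) ℂ

/-- Pauli-z on qubit 1: `σz ⊗ I2 ⊗ I2`. -/
def Z1 : M8 := Matrix.diagonal fun i => (-1 : ℂ) ^ (i.val / 4)
/-- Pauli-z on qubit 2: `I2 ⊗ σz ⊗ I2`. -/
def Z2 : M8 := Matrix.diagonal fun i => (-1 : ℂ) ^ (i.val / 2 % 2)
/-- Pauli-z on qubit 3: `I2 ⊗ I2 ⊗ σz`. -/
def Z3 : M8 := Matrix.diagonal fun i => (-1 : ℂ) ^ (i.val % 2)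

/-- Pauli-x on qubit `j` (j = 0,1,2 for qubits 1,2,3): flips the corresponding bit. -/
def X (j : Fin 3) : M8 := fun i k => if i.val ^^^ k.val = 2 ^ (2 - j.val) then 1 else 0

/-- The syndrome operators S1 = Z2 Z3, S2 = Z1 Z3, S3 = Z1 Z2, indexed by Fin 3. -/
def S : Fin 3 → M8 := ![Z2 * Z3, Z1 * Z3, Z1 * Z2]

/-- Projector onto the nominal code space. -/
def PiC : M8 := (4 : ℂ)⁻¹ • ((1 : M8) + S 0 + S 1 + S 2)

/-- The four syndrome-space projectors: `P 0 = Π_C`, `P j.succ = Π_j = X_j Π_C X_j`. -/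
def P : Fin 4 → M8 := ![PiC, X 0 * PiC * X 0, X 1 * PiC * X 1, X 2 * PiC * X 2]

/-- Lindblad dissipator `D_L(ρ) = LρL† − (1/2)(L†Lρ + ρL†L)`. -/
def Dissip {n : ℕ} (L ρ : Matrix (Fin n) (Fin n) ℂ) : Matrix (Fin n) (Fin n) ℂ :=
  L * ρ * Lᴴ - (2 : ℂ)⁻¹ • (Lᴴ * L * ρ + ρ * (Lᴴ * L))

/-- Measurement backaction `M_L(ρ) = Lρ + ρL† − tr(ρ(L+L†))ρ` for Hermitian `L`. -/
def Back {n : ℕ} (L ρ : Matrix (Fin n) (Fin n) ℂ) : Matrix (Fin n) (Fin n) ℂ :=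
  L * ρ + ρ * L - (2 * (L * ρ).trace) • ρ

/-- Sign `ε_{j,a}`: eigenvalue of `S j` on the range of `P a`
(`+1` on Π_C and on Π_{j}, `−1` otherwise). -/
def eps (j : Fin 3) (a : Fin 4) : ℂ := if a.val = 0 ∨ a.val = j.val + 1 then 1 else -1

end

/-! Every syndrome operator and projector is diagonal in the computational basis: `S j` has
entry `ε_{j,k}` at a basis state of syndrome `k`, and `P k` is the indicator of syndrome `k`.
For a positive `ρ = B†B`, `tr((1 - Π_k) ρ) = ‖B (1 - Π_k)‖²` (Frobenius), so `tr(Π_k ρ) = tr ρ`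
forces `Π_k ρ = ρ`; hence `ρ` lies in the `ε_{j,k}`-eigenspace of every `S j`, on both sides.
An operator commuting with a Hermitian involution `L` is fixed by `ρ ↦ L ρ L`, which kills
`D_L`; and `Lρ = ρL = cρ` with `tr ρ = 1` gives `M_L(ρ) = 2cρ - 2cρ = 0`. -/

namespace Matrix.PosSemidef

variable {n 𝕜 : Type*} [Fintype n] [RCLike 𝕜] {ρ Q : Matrix n n 𝕜}

theorem mul_eq_zero_of_trace_mul_eq_zero (hρ : ρ.PosSemidef) (hQ : IsStarProjection Q)
    (h : (Q * ρ).trace = 0) : ρ * Q = 0 := by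
  classical
  open scoped MatrixOrder in
  obtain ⟨B, rfl⟩ := CStarAlgebra.nonneg_iff_eq_star_mul_self.mp hρ.nonneg
  have hQ' : Qᴴ = Q := hQ.isSelfAdjoint
  have hBQ : B * Q = 0 := by
    rw [← trace_mul_conjTranspose_self_eq_zero_iff, conjTranspose_mul, hQ', ← mul_assoc,
      mul_assoc B, hQ.isIdempotentElem.eq, trace_mul_comm, ← mul_assoc, trace_mul_comm]
    exact h
  rw [mul_assoc, hBQ, mul_zero]

theorem mul_eq_self_of_trace_mul_eq_trace [DecidableEq n] (hρ : ρ.PosSemidef)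
    (hQ : IsStarProjection Q) (h : (Q * ρ).trace = ρ.trace) : Q * ρ = ρ := by
  have hρQ : ρ * (1 - Q) = 0 := hρ.mul_eq_zero_of_trace_mul_eq_zero hQ.one_sub <| by
    rw [sub_mul, one_mul, trace_sub, h, sub_self]
  rw [mul_sub, mul_one, sub_eq_zero] at hρQ
  have hQ' : Qᴴ = Q := hQ.isSelfAdjoint
  calc Q * ρ = (ρ * Q)ᴴ := by rw [conjTranspose_mul, hρ.1.eq, hQ']
    _ = ρ := by rw [← hρQ, hρ.1.eq]

end Matrix.PosSemidef

section Steady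

variable {n : ℕ} {L ρ : Matrix (Fin n) (Fin n) ℂ}

theorem dissip_eq_zero_of_commute (hL : Lᴴ = L) (hLL : L * L = 1) (h : Commute L ρ) :
    Dissip L ρ = 0 := by
  have hLρL : L * ρ * L = ρ := by rw [mul_assoc, ← h.eq, ← mul_assoc, hLL, one_mul]
  rw [Dissip, hL, hLρL, hLL, one_mul, mul_one, ← two_smul ℂ ρ, smul_smul]
  norm_num

theorem back_eq_zero_of_mul_eq_smul {c : ℂ} (hτ : ρ.trace = 1) (hLρ : L * ρ = c • ρ)
    (hρL : ρ * L = c • ρ) : Back L ρ = 0 := by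
  rw [Back, hLρ, hρL, trace_smul, hτ, smul_eq_mul, mul_one, ← add_smul, ← sub_smul, two_mul,
    sub_self, zero_smul]

end Steady

def syndrome : Fin 8 → Fin 4 := ![0, 3, 2, 1, 1, 2, 3, 0]

def flipBit (j : Fin 3) : Equiv.Perm (Fin 8) :=
  Function.Involutive.toPerm (fun i => ⟨i.val ^^^ 2 ^ (2 - j.val), by revert i j; decide⟩)
    fun i => Fin.ext (xor_cancel_right _ _)

lemma flipBit_symm (j : Fin 3) : (flipBit j).symm = flipBit j :=
  Function.Involutive.toPerm_symm _

lemma X_eq_permMatrix (j : Fin 3) : X j = (flipBit j).permMatrix ℂ := by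
  ext i k
  simp only [X, Equiv.Perm.permMatrix, PEquiv.toMatrix_apply, Equiv.toPEquiv_apply,
    Option.mem_def, Option.some.injEq, flipBit]
  congr 1
  revert i j k
  decide

lemma X_mul_diagonal_mul_X (j : Fin 3) (d : Fin 8 → ℂ) :
    X j * diagonal d * X j = diagonal (d ∘ flipBit j) := by
  rw [X_eq_permMatrix, Equiv.Perm.permMatrix, PEquiv.toMatrix_toPEquiv_mul,
    PEquiv.mul_toMatrix_toPEquiv, submatrix_submatrix, flipBit_symm]
  exact submatrix_diagonal_equiv d _

lemma eps_mul_self (j : Fin 3) (a : Fin 4) : eps j a * eps j a = 1 := by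
  unfold eps; split_ifs <;> norm_num

lemma star_eps (j : Fin 3) (a : Fin 4) : star (eps j a) = eps j a := by
  unfold eps; split_ifs <;> simp

lemma S_eq_diagonal (j : Fin 3) : S j = diagonal fun i => eps j (syndrome i) := by
  fin_cases j <;>
  · simp only [S, Z1, Z2, Z3, Fin.zero_eta, Fin.mk_one, Fin.reduceFinMk, Matrix.cons_val,
      diagonal_mul_diagonal, diagonal_eq_diagonal_iff]
    intro i; fin_cases i <;> norm_num [eps, syndrome]

lemma inv_four_mul_sum_eps (a : Fin 4) :
    (4 : ℂ)⁻¹ * (1 + eps 0 a + eps 1 a + eps 2 a) = if a = 0 then 1 else 0 := by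
  fin_cases a <;> norm_num [eps]

lemma PiC_eq_diagonal : PiC = diagonal fun i => if syndrome i = 0 then 1 else 0 := by
  simp only [PiC, S_eq_diagonal, ← diagonal_one, diagonal_add, ← diagonal_smul,
    diagonal_eq_diagonal_iff]
  exact fun i => inv_four_mul_sum_eps (syndrome i)

lemma syndrome_flipBit_eq_zero (j : Fin 3) (i : Fin 8) :
    syndrome (flipBit j i) = 0 ↔ syndrome i = j.succ := by
  revert i j; decide

lemma P_succ (j : Fin 3) : P j.succ = X j * PiC * X j := by
  fin_cases j <;> rfl

lemma P_eq_diagonal (k : Fin 4) : P k = diagonal fun i => if syndrome i = k then 1 else 0 := by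
  induction k using Fin.cases with
  | zero => exact PiC_eq_diagonal
  | succ j =>
    rw [P_succ, PiC_eq_diagonal, X_mul_diagonal_mul_X, diagonal_eq_diagonal_iff]
    intro i
    simp only [Function.comp_apply, syndrome_flipBit_eq_zero]

lemma isStarProjection_P (k : Fin 4) : IsStarProjection (P k) := by
  rw [P_eq_diagonal]
  constructor
  · rw [IsIdempotentElem, diagonal_mul_diagonal, diagonal_eq_diagonal_iff]
    intro i; split_ifs <;> simp
  · rw [IsSelfAdjoint, star_eq_conjTranspose, diagonal_conjTranspose, diagonal_eq_diagonal_iff]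
    intro i; rw [Pi.star_apply]; split_ifs <;> simp

lemma conjTranspose_S (j : Fin 3) : (S j)ᴴ = S j := by
  rw [S_eq_diagonal, diagonal_conjTranspose, diagonal_eq_diagonal_iff]
  exact fun i => star_eps j (syndrome i)

lemma S_mul_self (j : Fin 3) : S j * S j = 1 := by
  rw [S_eq_diagonal, diagonal_mul_diagonal, ← diagonal_one, diagonal_eq_diagonal_iff]
  exact fun i => eps_mul_self j (syndrome i)

lemma S_mul_P (j : Fin 3) (k : Fin 4) : S j * P k = eps j k • P k := by
  rw [S_eq_diagonal, P_eq_diagonal, diagonal_mul_diagonal, ← diagonal_smul,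
    diagonal_eq_diagonal_iff]
  intro i; split_ifs with h <;> simp [h]

/-- a density matrix fully supported on one syndrome subspace is a
steady state of the open-loop measurement dynamics. -/
theorem supported_state_is_steady (ρ : M8) (hρ : ρ.PosSemidef) (hτ : ρ.trace = 1)
    (k : Fin 4) (hk : (P k * ρ).trace = 1) :
    ∀ j : Fin 3,
      S j * ρ = eps j k • ρ ∧ ρ * S j = eps j k • ρ ∧
      Dissip (S j) ρ = 0 ∧ Back (S j) ρ = 0 := by
  intro j
  have hPρ : P k * ρ = ρ :=
    hρ.mul_eq_self_of_trace_mul_eq_trace (isStarProjection_P k) (hk.trans hτ.symm)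
  have hSρ : S j * ρ = eps j k • ρ := by
    calc S j * ρ = S j * P k * ρ := by rw [mul_assoc, hPρ]
      _ = eps j k • ρ := by rw [S_mul_P, smul_mul_assoc, hPρ]
  have hρS : ρ * S j = eps j k • ρ := by
    simpa only [conjTranspose_mul, conjTranspose_smul, hρ.1.eq, conjTranspose_S, star_eps]
      using congrArg conjTranspose hSρ
  exact ⟨hSρ, hρS, dissip_eq_zero_of_commute (conjTranspose_S j) (S_mul_self j)
    (hSρ.trans hρS.symm), back_eq_zero_of_mul_eq_smul hτ hSρ hρS⟩
end

section
/- Let α ∈ (1/2, 1), and suppose p_1, p_2, p_3 ≥ 0, p_1 + p_2 + p_3 ≤ 1 and p_1 ≥ α. Set f_j = p_j + (p_1+p_2+p_3) and V = √f_1 + √f_2 + √f_3. Then (6c/(2α−1)) · [ (1−f_1)/√f_1 + (1−2(p_1+p_2))/(2√f_2) + (1−2(p_1+p_3))/(2√f_3) ] ≤ −c·V for every c > 0. -/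
/-- in the active-feedback region `p₁ ≥ α` the generator bound
`(6c/(2α−1))·[(1−f₁)/√f₁ + (1−2(p₁+p₂))/(2√f₂) + (1−2(p₁+p₃))/(2√f₃)] ≤ −c·V` holds. -/
theorem feedback_region_generator_bound (α : ℝ) (hα : 1 / 2 < α) (hα1 : α < 1)
    (p1 p2 p3 : ℝ) (h1 : 0 ≤ p1) (h2 : 0 ≤ p2) (h3 : 0 ≤ p3)
    (hsum : p1 + p2 + p3 ≤ 1) (hp1 : α ≤ p1) (c : ℝ) (hc : 0 < c) :
    6 * c / (2 * α - 1) *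
        ((1 - (2 * p1 + p2 + p3)) / Real.sqrt (2 * p1 + p2 + p3)
          + (1 - 2 * (p1 + p2)) / (2 * Real.sqrt (p1 + 2 * p2 + p3))
          + (1 - 2 * (p1 + p3)) / (2 * Real.sqrt (p1 + p2 + 2 * p3))) ≤
      -c * (Real.sqrt (2 * p1 + p2 + p3) + Real.sqrt (p1 + 2 * p2 + p3)
          + Real.sqrt (p1 + p2 + 2 * p3)) := by
  have hk : 0 < 2 * α - 1 := by linarith
  have hf1pos : (0:ℝ) < 2 * p1 + p2 + p3 := by linarith
  have hf2pos : (0:ℝ) < p1 + 2 * p2 + p3 := by linarith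
  have hf3pos : (0:ℝ) < p1 + p2 + 2 * p3 := by linarith
  set a := Real.sqrt (2 * p1 + p2 + p3) with hadef
  set b := Real.sqrt (p1 + 2 * p2 + p3) with hbdef
  set d := Real.sqrt (p1 + p2 + 2 * p3) with hddef
  have ha : 0 < a := Real.sqrt_pos.mpr hf1pos
  have hb : 0 < b := Real.sqrt_pos.mpr hf2pos
  have hd : 0 < d := Real.sqrt_pos.mpr hf3pos
  have ha2 : a ^ 2 = 2 * p1 + p2 + p3 := Real.sq_sqrt hf1pos.le
  have hb2 : b ^ 2 = p1 + 2 * p2 + p3 := Real.sq_sqrt hf2pos.le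
  have hd2 : d ^ 2 = p1 + p2 + 2 * p3 := Real.sq_sqrt hf3pos.le
  have hnum1 : 1 - (2 * p1 + p2 + p3) ≤ -(2 * α - 1) := by linarith
  have hnum2 : 1 - 2 * (p1 + p2) ≤ -(2 * α - 1) := by linarith
  have hnum3 : 1 - 2 * (p1 + p3) ≤ -(2 * α - 1) := by linarith
  have hB : (1 - (2 * p1 + p2 + p3)) / a + (1 - 2 * (p1 + p2)) / (2 * b)
      + (1 - 2 * (p1 + p3)) / (2 * d)
      ≤ (-(2 * α - 1)) / a + (-(2 * α - 1)) / (2 * b) + (-(2 * α - 1)) / (2 * d) := by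
    gcongr
  have step : 6 * c / (2 * α - 1) *
      ((1 - (2 * p1 + p2 + p3)) / a + (1 - 2 * (p1 + p2)) / (2 * b)
        + (1 - 2 * (p1 + p3)) / (2 * d))
      ≤ 6 * c / (2 * α - 1) *
      ((-(2 * α - 1)) / a + (-(2 * α - 1)) / (2 * b) + (-(2 * α - 1)) / (2 * d)) :=
    mul_le_mul_of_nonneg_left hB (by positivity)
  refine step.trans ?_
  have hkey : 6 * c / (2 * α - 1) *
      ((-(2 * α - 1)) / a + (-(2 * α - 1)) / (2 * b) + (-(2 * α - 1)) / (2 * d))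
      = -(6 * c / a + 3 * c / b + 3 * c / d) := by
    field_simp
    ring
  rw [hkey]
  have hA : a ≤ 6 / a := by
    rw [le_div_iff₀ ha, ← sq, ha2]; linarith
  have hBb : b ≤ 3 / b := by
    rw [le_div_iff₀ hb, ← sq, hb2]; linarith
  have hD : d ≤ 3 / d := by
    rw [le_div_iff₀ hd, ← sq, hd2]; linarith
  have hmain : c * (a + b + d) ≤ 6 * c / a + 3 * c / b + 3 * c / d := by
    calc c * (a + b + d) ≤ c * (6 / a + 3 / b + 3 / d) := by
          apply mul_le_mul_of_nonneg_left _ hc.le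
          linarith
      _ = 6 * c / a + 3 * c / b + 3 * c / d := by ring
  linarith
end
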